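/- arXiv:1701.08733 — 3 statements merged into one kernel-verified Lean document; each statement's English description precedes it below -/
import Mathlib

section
/- For every integer i ≥ 1 and every commutative ℤ_(p)-algebra S, the substitution map r ↦ E(r) is a bijection from T^i·S[[T]] onto 1 + T^i·S[[T]]. -/
open PowerSeries

noncomputable section

open scoped Classical in
/-- The series ℓ(T) = ∑_{i≥0} T^{p^i}/p^i over ℚ. -/
def lseries (p : ℕ) : PowerSeries ℚ :=
  PowerSeries.mk fun n => if ∃ i : ℕ, n = p ^ i then (n : ℚ)⁻¹ else 0

/-- Substitution `f(g)` of a power series `g` with zero constant coefficient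
into a power series `f`. -/
def psComp {R : Type*} [CommSemiring R] (g f : PowerSeries R) : PowerSeries R :=
  PowerSeries.mk fun n =>
    ∑ k ∈ Finset.range (n + 1), PowerSeries.coeff (R := R) k f * PowerSeries.coeff (R := R) n (g ^ k)

/-- The Artin–Hasse exponential E(T) = exp(∑ T^{p^i}/p^i) over ℚ. -/
def artinHasse (p : ℕ) : PowerSeries ℚ := psComp (lseries p) (PowerSeries.exp ℚ)

/-- The prime ideal (p) of ℤ. -/
abbrev pIdeal (p : ℕ) : Ideal ℤ := Ideal.span {(p : ℤ)}

instance pIdeal.isPrime (p : ℕ) [hp : Fact p.Prime] : (pIdeal p).IsPrime := by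
  rw [Ideal.span_singleton_prime (by exact_mod_cast hp.out.ne_zero)]
  exact Nat.prime_iff_prime_int.mp hp.out

/-- ℤ_(p), the localization of ℤ at the prime p. -/
abbrev ZLocP (p : ℕ) [Fact p.Prime] := Localization.AtPrime (pIdeal p)

/-- The canonical ring map ℤ_(p) → ℚ. -/
def ZLocPtoRat (p : ℕ) [Fact p.Prime] : ZLocP p →+* ℚ :=
  IsLocalization.lift (M := (pIdeal p).primeCompl)
    (g := Int.castRingHom ℚ)
    (fun y => isUnit_iff_ne_zero.mpr (by
      have h0 : (y : ℤ) ≠ 0 := fun h => y.2 (h ▸ (pIdeal p).zero_mem)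
      simpa using h0))

/-! Over any commutative ring, if `F ∈ 1 + X + X²R⟦X⟧` and `X` divides `g` and `h`, then
`g ≡ h mod Xⁿ` implies `F(g) - F(h) ≡ g - h mod Xⁿ⁺¹`. This makes `g ↦ F(g)` injective on
`X R⟦X⟧`, and makes the iteration `g ↦ g - (F(g) - f)` converge `X`-adically to a preimage of `f`;
both steps respect divisibility by `Xⁱ`. The Artin–Hasse exponential is such an `F`: the
coefficients of `T⁰` and `T¹` in its `ℤ_(p)`-model are `1`, since `ℤ_(p)` embeds into `ℚ`. -/

section Substitution

variable {R : Type*} [CommRing R]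

theorem coeff_zero_psComp (g F : R⟦X⟧) : coeff 0 (psComp g F) = coeff 0 F := by
  simp [psComp]

theorem coeff_psComp_eq_sum_range_of_le {g : R⟦X⟧} (hg : X ∣ g) (F : R⟦X⟧) {m N : ℕ}
    (hmN : m ≤ N) :
    coeff m (psComp g F) = ∑ k ∈ Finset.range (N + 1), coeff k F * coeff m (g ^ k) := by
  rw [psComp, coeff_mk]
  refine Finset.sum_subset (Finset.range_subset_range.mpr (by omega)) fun k _ hk => ?_
  have hmk : m < k := by simpa using hk
  rw [X_pow_dvd_iff.mp (pow_dvd_pow_of_dvd hg k) m hmk, mul_zero]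

theorem X_pow_dvd_psComp_sub_one {F : R⟦X⟧} (hF0 : coeff 0 F = 1) {i : ℕ} {g : R⟦X⟧}
    (hg : X ^ i ∣ g) : X ^ i ∣ psComp g F - 1 := by
  refine X_pow_dvd_iff.mpr fun m hm => ?_
  have hvanish : ∀ k ∈ Finset.range m, coeff (k + 1) F * coeff m (g ^ (k + 1)) = 0 := fun k _ => by
    rw [X_pow_dvd_iff.mp (hg.trans (dvd_pow_self g k.succ_ne_zero)) m hm, mul_zero]
  rw [map_sub, psComp, coeff_mk, Finset.sum_range_succ', Finset.sum_eq_zero hvanish,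
    hF0]
  simp

theorem X_pow_succ_dvd_pow_sub_pow {g h : R⟦X⟧} (hg : X ∣ g) (hh : X ∣ h) {n : ℕ}
    (hgh : X ^ n ∣ g - h) {k : ℕ} (hk : 2 ≤ k) : X ^ (n + 1) ∣ g ^ k - h ^ k := by
  rw [← geom_sum₂_mul, pow_succ']
  refine mul_dvd_mul (Finset.dvd_sum fun j _ => ?_) hgh
  rcases j.eq_zero_or_pos with rfl | hj
  · exact (hh.trans (dvd_pow_self h (by omega))).mul_left _
  · exact (hg.trans (dvd_pow_self g hj.ne')).mul_right _

/-- The `k = 1` term of `F(g) - F(h)` is `g - h`; for `k ≥ 2` the term `g^k - h^k` gains a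
power of `X`, because `g^k - h^k = (g - h) · ∑ gʲ hᵏ⁻¹⁻ʲ` and every summand is divisible by `X`. -/
theorem X_pow_succ_dvd_psComp_sub_psComp_sub_sub {F : R⟦X⟧} (hF1 : coeff 1 F = 1)
    {g h : R⟦X⟧} (hg : X ∣ g) (hh : X ∣ h) {n : ℕ} (hgh : X ^ n ∣ g - h) :
    X ^ (n + 1) ∣ (psComp g F - psComp h F) - (g - h) := by
  refine X_pow_dvd_iff.mpr fun m hm => ?_
  have hvanish : ∀ k ∈ Finset.range m,
      coeff (k + 1 + 1) F * coeff m (g ^ (k + 1 + 1))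
        - coeff (k + 1 + 1) F * coeff m (h ^ (k + 1 + 1)) = 0 := fun k _ => by
    rw [← mul_sub, ← map_sub,
      X_pow_dvd_iff.mp (X_pow_succ_dvd_pow_sub_pow hg hh hgh (by omega)) m hm, mul_zero]
  rw [map_sub, map_sub, map_sub, coeff_psComp_eq_sum_range_of_le hg F m.le_succ,
    coeff_psComp_eq_sum_range_of_le hh F m.le_succ, ← Finset.sum_sub_distrib,
    Finset.sum_range_succ', Finset.sum_range_succ', Finset.sum_eq_zero hvanish, hF1]
  simp

theorem eq_of_forall_X_pow_dvd_sub {g h : R⟦X⟧} (H : ∀ n, X ^ n ∣ g - h) : g = h := by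
  ext n
  simpa [sub_eq_zero] using X_pow_dvd_iff.mp (H (n + 1)) n n.lt_succ_self

theorem psComp_injOn {F : R⟦X⟧} (hF1 : coeff 1 F = 1) {i : ℕ} (hi : 1 ≤ i) :
    Set.InjOn (fun g => psComp g F) {g : R⟦X⟧ | X ^ i ∣ g} := by
  intro g hg h hh (hgh : psComp g F = psComp h F)
  have hX : ∀ {r : R⟦X⟧}, X ^ i ∣ r → X ∣ r := (dvd_pow_self X (by omega)).trans
  refine eq_of_forall_X_pow_dvd_sub fun n => ?_
  induction n with
  | zero => simp
  | succ n ih =>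
    have := X_pow_succ_dvd_psComp_sub_psComp_sub_sub hF1 (hX hg) (hX hh) ih
    rwa [hgh, sub_self, zero_sub, dvd_neg] at this

theorem exists_forall_X_pow_succ_dvd_sub (u : ℕ → R⟦X⟧)
    (hu : ∀ n, X ^ (n + 1) ∣ u (n + 1) - u n) : ∃ g : R⟦X⟧, ∀ n, X ^ (n + 1) ∣ g - u n := by
  have hstable : ∀ j m, j ≤ m → coeff j (u m) = coeff j (u j) := fun j m hjm => by
    induction m, hjm using Nat.le_induction with
    | base => rfl
    | succ m hjm ih =>
      rw [← ih, ← sub_eq_zero, ← map_sub]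
      exact X_pow_dvd_iff.mp (hu m) j (by omega)
  refine ⟨mk fun n => coeff n (u n), fun n => X_pow_dvd_iff.mpr fun j hj => ?_⟩
  rw [map_sub, coeff_mk, hstable j n (by omega), sub_self]

def psCompNewton (F f : R⟦X⟧) : ℕ → R⟦X⟧
  | 0 => f - 1
  | n + 1 => psCompNewton F f n - (psComp (psCompNewton F f n) F - f)

theorem psCompNewton_succ_sub (F f : R⟦X⟧) (n : ℕ) :
    psCompNewton F f (n + 1) - psCompNewton F f n = -(psComp (psCompNewton F f n) F - f) := by
  rw [psCompNewton]
  ring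

theorem psCompNewton_spec {F : R⟦X⟧} (hF0 : coeff 0 F = 1) (hF1 : coeff 1 F = 1)
    {i : ℕ} (hi : 1 ≤ i) {f : R⟦X⟧} (hf : X ^ i ∣ f - 1) (n : ℕ) :
    X ^ i ∣ psCompNewton F f n ∧ X ^ (n + 1) ∣ psComp (psCompNewton F f n) F - f := by
  have hX : ∀ {r : R⟦X⟧}, X ^ i ∣ r → X ∣ r := (dvd_pow_self X (by omega)).trans
  have hres : ∀ {g}, X ^ i ∣ g → X ^ i ∣ psComp g F - f := fun hg => by
    simpa using dvd_sub (X_pow_dvd_psComp_sub_one hF0 hg) hf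
  induction n with
  | zero => exact ⟨hf, (pow_dvd_pow X hi).trans (hres hf)⟩
  | succ n ih =>
    obtain ⟨hgn, hresn⟩ := ih
    have hgn1 : X ^ i ∣ psCompNewton F f (n + 1) := dvd_sub hgn (hres hgn)
    have hstep := psCompNewton_succ_sub F f n
    have hdist := X_pow_succ_dvd_psComp_sub_psComp_sub_sub hF1 (hX hgn1) (hX hgn)
      (hstep ▸ dvd_neg.mpr hresn)
    rw [hstep, sub_neg_eq_add, sub_add_sub_cancel] at hdist
    exact ⟨hgn1, hdist⟩

theorem psComp_surjOn {F : R⟦X⟧} (hF0 : coeff 0 F = 1) (hF1 : coeff 1 F = 1) {i : ℕ}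
    (hi : 1 ≤ i) :
    Set.SurjOn (fun g => psComp g F) {g : R⟦X⟧ | X ^ i ∣ g} {f : R⟦X⟧ | X ^ i ∣ f - 1} := by
  intro f (hf : X ^ i ∣ f - 1)
  have hX : ∀ {r : R⟦X⟧}, X ^ i ∣ r → X ∣ r := (dvd_pow_self X (by omega)).trans
  have hu := psCompNewton_spec hF0 hF1 hi hf
  obtain ⟨g, hg⟩ := exists_forall_X_pow_succ_dvd_sub (psCompNewton F f) fun n => by
    rw [psCompNewton_succ_sub, dvd_neg]
    exact (hu n).2
  have hgi : X ^ i ∣ g := by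
    have hgi' := hg (i - 1)
    rw [Nat.sub_add_cancel hi] at hgi'
    simpa using dvd_add hgi' (hu (i - 1)).1
  refine ⟨g, hgi, eq_of_forall_X_pow_dvd_sub fun n => (pow_dvd_pow X n.le_succ).trans ?_⟩
  show X ^ (n + 1) ∣ psComp g F - f
  have hdist := X_pow_succ_dvd_psComp_sub_psComp_sub_sub hF1 (hX hgi) (hX (hu n).1) (hg n)
  have hsplit : psComp g F - f =
      ((psComp g F - psComp (psCompNewton F f n) F) - (g - psCompNewton F f n))
        + (g - psCompNewton F f n) + (psComp (psCompNewton F f n) F - f) := by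
    ring
  rw [hsplit]
  exact dvd_add (dvd_add ((pow_dvd_pow X (n + 1).le_succ).trans hdist) (hg n)) (hu n).2

theorem psComp_bijOn {F : R⟦X⟧} (hF0 : coeff 0 F = 1) (hF1 : coeff 1 F = 1) {i : ℕ}
    (hi : 1 ≤ i) :
    Set.BijOn (fun g => psComp g F) {g : R⟦X⟧ | X ^ i ∣ g} {f : R⟦X⟧ | X ^ i ∣ f - 1} :=
  ⟨fun _ hg => X_pow_dvd_psComp_sub_one hF0 hg, psComp_injOn hF1 hi, psComp_surjOn hF0 hF1 hi⟩

end Substitution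

theorem coeff_zero_artinHasse (p : ℕ) : coeff 0 (artinHasse p) = 1 := by
  simp [artinHasse, coeff_zero_psComp]

theorem coeff_one_artinHasse (p : ℕ) : coeff 1 (artinHasse p) = 1 := by
  have hl : coeff 1 (lseries p) = 1 := by
    rw [lseries, coeff_mk, if_pos ⟨0, (pow_zero p).symm⟩]
    norm_num
  simp [artinHasse, psComp, Finset.sum_range_succ, coeff_exp, hl]

theorem ZLocPtoRat_injective (p : ℕ) [Fact p.Prime] : Function.Injective (ZLocPtoRat p) := by
  rw [ZLocPtoRat, IsLocalization.lift_injective_iff]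
  intro x y
  rw [(IsLocalization.injective (ZLocP p) (Ideal.primeCompl_le_nonZeroDivisors (pIdeal p))).eq_iff]
  simp

/-- for every integer `i ≥ 1` and every commutative `ℤ_(p)`-algebra `S`,
substitution into the Artin–Hasse exponential `E` (regarded as an element of `S[[T]]`,
via its model `EZ` over `ℤ_(p)`) is a bijection from `T^i·S[[T]]` onto `1 + T^i·S[[T]]`. -/
theorem statement0 (p : ℕ) [Fact p.Prime] (i : ℕ) (hi : 1 ≤ i)
    (S : Type*) [CommRing S] [Algebra (ZLocP p) S]
    (EZ : PowerSeries (ZLocP p))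
    (hEZ : PowerSeries.map (ZLocPtoRat p) EZ = artinHasse p) :
    Set.BijOn (fun r => psComp r (PowerSeries.map (algebraMap (ZLocP p) S) EZ))
      {r : PowerSeries S | X ^ i ∣ r}
      {f : PowerSeries S | X ^ i ∣ f - 1} := by
  have hcoeff : ∀ k, coeff k (artinHasse p) = 1 →
      coeff k (PowerSeries.map (algebraMap (ZLocP p) S) EZ) = 1 := fun k hk => by
    have hEZk : coeff k EZ = 1 :=
      ZLocPtoRat_injective p (by rw [← coeff_map, hEZ, hk, map_one])
    rw [coeff_map, hEZk, map_one]
  exact psComp_bijOn (hcoeff 0 (coeff_zero_artinHasse p)) (hcoeff 1 (coeff_one_artinHasse p)) hi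

end
end

section
/- Let R'' = {x ∈ Q(R) : v(x) ≥ 0} be the valuation ring of v in the fraction field Q(R) of R. Then R ⊆ R'' and the inclusion is strict: for any (i,j), (i',j) ∈ 𝔛 with i ≠ i', the element π_{(i,j)}/π_{(i',j)} of Q(R) satisfies v(π_{(i,j)}/π_{(i',j)}) = 0, hence lies in R'', but does not lie in R. Such pairs exist, e.g. (m, d_m) and (m+1, d_m) both lie in 𝔛. -/
open PowerSeries

noncomputable section

/-- The index set 𝔛 = {(i,j) : j ≤ δ·p^i, j not a positive multiple of p},
where δ = d_m/p^m (the condition j ≤ δ·p^i is written as j·p^m ≤ d_m·p^i). -/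
def Xfrak (p m dm : ℕ) : Set (ℕ × ℕ) :=
  {x | x.2 * p ^ m ≤ dm * p ^ x.1 ∧ ¬(0 < x.2 ∧ p ∣ x.2)}

open scoped Classical in
/-- The valuation v on R = ℤ_p[[π_x : x ∈ 𝔛]] : for r ≠ 0 it is the minimum of
(1/δ)·∑_{(i,j)} j·u((i,j)) over the monomials π^u occurring in r, where
1/δ = p^m/d_m; and v(0) = ∞. -/
def vR {A : Type*} [CommSemiring A] (p m dm : ℕ)
    (r : MvPowerSeries (Xfrak p m dm) A) : WithTop ℚ :=
  if r = 0 then ⊤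
  else (((sInf {w : ℕ | ∃ u : (Xfrak p m dm) →₀ ℕ,
      MvPowerSeries.coeff (R := A) u r ≠ 0 ∧ w = u.sum fun x k => x.1.2 * k} : ℕ) : ℚ)
    * (p : ℚ) ^ m / (dm : ℚ) : ℚ)

instance XfrakDomain (p m dm : ℕ) [Fact p.Prime] : IsDomain (MvPowerSeries (Xfrak p m dm) ℤ_[p]) :=
  NoZeroDivisors.to_isDomain _

/-! The valuation `v` is computed exactly on monomials, so `w` agrees with `v` on `R` and
`w(π_x/π_{x'}) = v(π_x) - v(π_{x'}) = 0` when `x` and `x'` have the same `j`. The quotient is not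
in `R` because the variable `π_{x'}` divides the variable `π_x` only when `x' = x`. -/

theorem MvPowerSeries.X_ne_zero {σ R : Type*} [Semiring R] [Nontrivial R] (s : σ) :
    (X s : MvPowerSeries σ R) ≠ 0 := fun h => one_ne_zero (α := R) <| by
  classical
  simpa [coeff_X] using congrArg (coeff (Finsupp.single s 1)) h

theorem MvPowerSeries.X_dvd_X_iff {σ R : Type*} [CommSemiring R] [Nontrivial R] {s t : σ} :
    (X s : MvPowerSeries σ R) ∣ X t ↔ s = t := by
  classical
  refine ⟨fun h => ?_, fun h => h ▸ dvd_rfl⟩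
  by_contra hst
  have := X_dvd_iff.mp h (Finsupp.single t 1) (Finsupp.single_eq_of_ne hst)
  simp [coeff_X] at this

theorem IsFractionRing.div_mem_range_algebraMap_iff {R K : Type*} [CommRing R] [Field K]
    [Algebra R K] [IsFractionRing R K] {a b : R} (hb : b ≠ 0) :
    algebraMap R K a / algebraMap R K b ∈ Set.range (algebraMap R K) ↔ b ∣ a := by
  have hb' : algebraMap R K b ≠ 0 := (map_ne_zero_iff _ (IsFractionRing.injective R K)).mpr hb
  constructor
  · rintro ⟨c, hc⟩
    refine ⟨c, IsFractionRing.injective R K ?_⟩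
    rw [map_mul, hc, mul_div_cancel₀ _ hb']
  · rintro ⟨c, rfl⟩
    exact ⟨c, by rw [map_mul, mul_div_cancel_left₀ _ hb']⟩

theorem mk_mem_Xfrak {p m dm i : ℕ} (hp : p ≠ 0) (hmi : m ≤ i) (hpdm : ¬ p ∣ dm) :
    (i, dm) ∈ Xfrak p m dm :=
  ⟨Nat.mul_le_mul_left dm (Nat.pow_le_pow_right (Nat.pos_of_ne_zero hp) hmi), fun h => hpdm h.2⟩

section vR

variable {A : Type*} [CommSemiring A] (p m dm : ℕ)

theorem vR_nonneg (r : MvPowerSeries (Xfrak p m dm) A) : 0 ≤ vR p m dm r := by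
  unfold vR
  split_ifs
  · exact le_top
  · exact_mod_cast (by positivity : (0 : ℚ) ≤ _)

theorem vR_monomial (u : Xfrak p m dm →₀ ℕ) {a : A} (ha : a ≠ 0) :
    vR p m dm (MvPowerSeries.monomial u a)
      = (((u.sum fun x k => x.1.2 * k : ℕ) : ℚ) * (p : ℚ) ^ m / (dm : ℚ) : ℚ) := by
  classical
  have hne : MvPowerSeries.monomial u a ≠ 0 := fun h => ha <| by
    simpa using congrArg (MvPowerSeries.coeff u) h
  have hweights : {w : ℕ | ∃ u' : Xfrak p m dm →₀ ℕ,
      MvPowerSeries.coeff u' (MvPowerSeries.monomial u a) ≠ 0 ∧ w = u'.sum fun x k => x.1.2 * k}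
      = {u.sum fun x k => x.1.2 * k} := by
    ext w
    simp only [Set.mem_ofPred_eq, Set.mem_singleton_iff, MvPowerSeries.coeff_monomial]
    constructor
    · rintro ⟨u', hu', rfl⟩
      split_ifs at hu' with h
      · rw [h]
      · exact absurd rfl hu'
    · rintro rfl
      exact ⟨u, by rwa [if_pos rfl], rfl⟩
  rw [vR, if_neg hne, hweights, csInf_singleton]

variable [Nontrivial A]

theorem vR_one : vR p m dm (1 : MvPowerSeries (Xfrak p m dm) A) = 0 := by
  rw [← MvPowerSeries.monomial_zero_one, vR_monomial p m dm 0 one_ne_zero]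
  simp

theorem vR_X (x : Xfrak p m dm) :
    vR p m dm (MvPowerSeries.X x : MvPowerSeries (Xfrak p m dm) A)
      = ((x.1.2 : ℚ) * (p : ℚ) ^ m / (dm : ℚ) : ℚ) := by
  rw [MvPowerSeries.X_def, vR_monomial p m dm _ one_ne_zero, Finsupp.sum_single_index (by simp)]
  simp

end vR

theorem statement10_general (p m dm : ℕ) [Fact p.Prime] (hpdm : ¬ p ∣ dm)
    (w : FractionRing (MvPowerSeries (Xfrak p m dm) ℤ_[p]) → WithTop ℚ)
    (hw : ∀ c b : MvPowerSeries (Xfrak p m dm) ℤ_[p], b ≠ 0 →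
      w (algebraMap _ (FractionRing (MvPowerSeries (Xfrak p m dm) ℤ_[p])) c
          / algebraMap _ _ b) + vR p m dm b = vR p m dm c) :
    (∀ r : MvPowerSeries (Xfrak p m dm) ℤ_[p],
        0 ≤ w (algebraMap _ (FractionRing (MvPowerSeries (Xfrak p m dm) ℤ_[p])) r))
    ∧ (∀ x x' : Xfrak p m dm, x.1.1 ≠ x'.1.1 → x.1.2 = x'.1.2 →
        w (algebraMap _ (FractionRing (MvPowerSeries (Xfrak p m dm) ℤ_[p]))
              (MvPowerSeries.X x : MvPowerSeries (Xfrak p m dm) ℤ_[p])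
              / algebraMap _ _ (MvPowerSeries.X x' : MvPowerSeries (Xfrak p m dm) ℤ_[p])) = 0
        ∧ (algebraMap _ (FractionRing (MvPowerSeries (Xfrak p m dm) ℤ_[p]))
              (MvPowerSeries.X x : MvPowerSeries (Xfrak p m dm) ℤ_[p])
              / algebraMap _ _ (MvPowerSeries.X x' : MvPowerSeries (Xfrak p m dm) ℤ_[p]))
            ∉ Set.range (algebraMap (MvPowerSeries (Xfrak p m dm) ℤ_[p])
                (FractionRing (MvPowerSeries (Xfrak p m dm) ℤ_[p]))))
    ∧ (m, dm) ∈ Xfrak p m dm ∧ (m + 1, dm) ∈ Xfrak p m dm := by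
  have hwR : ∀ r, w (algebraMap _ (FractionRing (MvPowerSeries (Xfrak p m dm) ℤ_[p])) r)
      = vR p m dm r := fun r => by
    simpa [vR_one] using hw r 1 one_ne_zero
  refine ⟨fun r => hwR r ▸ vR_nonneg p m dm r, fun x x' hi hj => ⟨?_, ?_⟩,
    mk_mem_Xfrak (Fact.out : p.Prime).ne_zero le_rfl hpdm,
    mk_mem_Xfrak (Fact.out : p.Prime).ne_zero m.le_succ hpdm⟩
  · have h := hw (MvPowerSeries.X x) (MvPowerSeries.X x') (MvPowerSeries.X_ne_zero x')
    rw [vR_X, vR_X, hj] at h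
    exact WithTop.add_right_cancel WithTop.coe_ne_top (by rw [h, zero_add])
  · rw [IsFractionRing.div_mem_range_algebraMap_iff (MvPowerSeries.X_ne_zero x'),
      MvPowerSeries.X_dvd_X_iff]
    exact fun h => hi (h ▸ rfl)

/-- let `w` be the extension of `v` to the fraction field `Q(R)`
(characterized by `w(c/b) = v(c) − v(b)`), and let `R'' = {x : w(x) ≥ 0}` be its
valuation ring.  Then `R ⊆ R''`, and the inclusion is strict: for `(i,j), (i',j) ∈ 𝔛`
with `i ≠ i'`, the element `π_{(i,j)}/π_{(i',j)}` has `w = 0` (so lies in `R''`) but is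
not in (the image of) `R`.  Such pairs exist: `(m,d_m)` and `(m+1,d_m)` lie in `𝔛`. -/
theorem statement10 (p m dm : ℕ) [Fact p.Prime] (hdm : 1 ≤ dm) (hpdm : ¬ p ∣ dm)
    (w : FractionRing (MvPowerSeries (Xfrak p m dm) ℤ_[p]) → WithTop ℚ)
    (hw : ∀ c b : MvPowerSeries (Xfrak p m dm) ℤ_[p], b ≠ 0 →
      w (algebraMap _ (FractionRing (MvPowerSeries (Xfrak p m dm) ℤ_[p])) c
          / algebraMap _ _ b) + vR p m dm b = vR p m dm c) :
    (∀ r : MvPowerSeries (Xfrak p m dm) ℤ_[p],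
        0 ≤ w (algebraMap _ (FractionRing (MvPowerSeries (Xfrak p m dm) ℤ_[p])) r))
    ∧ (∀ x x' : Xfrak p m dm, x.1.1 ≠ x'.1.1 → x.1.2 = x'.1.2 →
        w (algebraMap _ (FractionRing (MvPowerSeries (Xfrak p m dm) ℤ_[p]))
              (MvPowerSeries.X x : MvPowerSeries (Xfrak p m dm) ℤ_[p])
              / algebraMap _ _ (MvPowerSeries.X x' : MvPowerSeries (Xfrak p m dm) ℤ_[p])) = 0
        ∧ (algebraMap _ (FractionRing (MvPowerSeries (Xfrak p m dm) ℤ_[p]))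
              (MvPowerSeries.X x : MvPowerSeries (Xfrak p m dm) ℤ_[p])
              / algebraMap _ _ (MvPowerSeries.X x' : MvPowerSeries (Xfrak p m dm) ℤ_[p]))
            ∉ Set.range (algebraMap (MvPowerSeries (Xfrak p m dm) ℤ_[p])
                (FractionRing (MvPowerSeries (Xfrak p m dm) ℤ_[p]))))
    ∧ (m, dm) ∈ Xfrak p m dm ∧ (m + 1, dm) ∈ Xfrak p m dm :=
  statement10_general p m dm hpdm w hw

end
end

section
/- Let g : ℝ → ℝ be g(x) = a(p−1)·x(x−1)/(2δ). Let L : ℝ_{≥0} → ℝ be the piecewise linear function which is affine on each interval [k, k+1] for k ∈ ℤ_{≥0} and satisfies L(k) = g(k) for all k ∈ ℤ_{≥0}. Let Σ = {k ∈ ℤ_{≥0} : k ≡ 0 or 1 (mod d_m)} and let U : ℝ_{≥0} → ℝ be the piecewise linear function which satisfies U(k) = g(k) for all k ∈ Σ and is affine between consecutive elements of Σ. Then for all x ≥ 0 one has 0 ≤ U(x) − L(x) ≤ W, where W = a(p−1)(d_m−1)²/(8δ). -/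
set_option maxHeartbeats 1000000 in
/-- let `g(x) = a(p−1)x(x−1)/(2δ)` with `δ = d_m/p^m`, let `L` be the
piecewise linear interpolation of `g` at the integers, and let `U` be the piecewise
linear interpolation of `g` at the points of `Σ = {k : k ≡ 0 or 1 (mod d_m)}`.
Then for all `x ≥ 0` one has `0 ≤ U(x) − L(x) ≤ W`, where
`W = a(p−1)(d_m−1)²/(8δ)`. -/
theorem statement18 (p a m dm : ℕ) [Fact p.Prime] (ha : 1 ≤ a) (hdm : 1 ≤ dm)
    (hpdm : ¬ p ∣ dm)
    (g L U : ℝ → ℝ)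
    (hg : ∀ x : ℝ, g x = (a : ℝ) * ((p : ℝ) - 1) * x * (x - 1) * (p : ℝ) ^ m / (2 * dm))
    (hL : ∀ k : ℕ, L k = g k)
    (hLaff : ∀ k : ℕ, ∀ x ∈ Set.Icc (k : ℝ) ((k : ℝ) + 1),
      L x = L k + (x - k) * (L (k + 1) - L k))
    (hU : ∀ k : ℕ, (k % dm = 0 ∨ k % dm = 1) → U k = g k)
    (hUaff : ∀ k l : ℕ, (k % dm = 0 ∨ k % dm = 1) → (l % dm = 0 ∨ l % dm = 1) → k < l →
      (∀ j : ℕ, k < j → j < l → ¬(j % dm = 0 ∨ j % dm = 1)) →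
      ∀ x ∈ Set.Icc (k : ℝ) (l : ℝ),
        U x = U k + (x - k) * (U l - U k) / ((l : ℝ) - k)) :
    ∀ x : ℝ, 0 ≤ x →
      0 ≤ U x - L x
      ∧ U x - L x ≤ (a : ℝ) * ((p : ℝ) - 1) * ((dm : ℝ) - 1) ^ 2 * (p : ℝ) ^ m / (8 * dm) := by
  intro x hx
  have hp2 : 2 ≤ p := (Fact.out (p := p.Prime)).two_le
  have hpR : (2:ℝ) ≤ p := by exact_mod_cast hp2
  have hdmR : (1:ℝ) ≤ dm := by exact_mod_cast hdm
  have haR : (1:ℝ) ≤ a := by exact_mod_cast ha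
  have hdm0 : (dm:ℝ) ≠ 0 := by linarith
  -- the coefficient c
  obtain ⟨c, hc_def⟩ : ∃ c : ℝ, c = (a:ℝ) * ((p:ℝ) - 1) * (p:ℝ) ^ m / (2 * dm) := ⟨_, rfl⟩
  have hc0 : 0 ≤ c := by
    rw [hc_def]
    apply div_nonneg
    · have h1 : (0:ℝ) ≤ (p:ℝ) - 1 := by linarith
      have h3 : (0:ℝ) ≤ (p:ℝ)^m := by positivity
      have h4 : (0:ℝ) ≤ a := by linarith
      exact mul_nonneg (mul_nonneg h4 h1) h3
    · linarith
  have hgc : ∀ t : ℝ, g t = c * (t * (t - 1)) := by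
    intro t; rw [hg t, hc_def]; ring
  have hW : (a : ℝ) * ((p : ℝ) - 1) * ((dm : ℝ) - 1) ^ 2 * (p : ℝ) ^ m / (8 * dm)
      = c * (((dm:ℝ) - 1) ^ 2 / 4) := by
    rw [hc_def]; field_simp; ring
  have hW0 : 0 ≤ (a : ℝ) * ((p : ℝ) - 1) * ((dm : ℝ) - 1) ^ 2 * (p : ℝ) ^ m / (8 * dm) := by
    rw [hW]
    exact mul_nonneg hc0 (by positivity)
  -- floor
  obtain ⟨k, hkx, hxk⟩ : ∃ k : ℕ, (k:ℝ) ≤ x ∧ x ≤ (k:ℝ) + 1 :=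
    ⟨Nat.floor x, Nat.floor_le hx, (Nat.lt_floor_add_one x).le⟩
  have hcast1 : ((k:ℝ) + 1) = ((k+1:ℕ):ℝ) := by push_cast; ring
  have hLx : L x = g k + (x - k) * (g ((k:ℝ) + 1) - g k) := by
    have h := hLaff k x ⟨hkx, hxk⟩
    rw [h, hL k, hcast1, hL (k+1), ← hcast1]
  rcases Nat.eq_zero_or_pos (k % dm) with hr | hr
  · -- k ≡ 0 mod dm : U coincides with L on [k, k+1]
    have h1 : (k+1) % dm = 0 ∨ (k+1) % dm = 1 := by
      have h2 : (k+1) % dm = 1 % dm := by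
        conv_lhs => rw [Nat.add_mod, hr]
        simp [Nat.mod_mod_of_dvd]
      rcases eq_or_lt_of_le hdm with h | h
      · left; rw [h2, ← h]
      · right; rw [h2]; exact Nat.one_mod_eq_one.mpr (by omega)
    have hmem : x ∈ Set.Icc (k:ℝ) ((k+1 : ℕ):ℝ) := ⟨hkx, by rw [← hcast1]; exact hxk⟩
    have h := hUaff k (k+1) (Or.inl hr) h1 (Nat.lt_succ_self k)
      (by intro j hj1 hj2; omega) x hmem
    rw [hU k (Or.inl hr), hU (k+1) h1] at h
    have hden : ((k+1:ℕ):ℝ) - (k:ℕ) = 1 := by push_cast; ring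
    rw [hden, div_one] at h
    have hzero : U x - L x = 0 := by
      rw [h, hLx, ← hcast1]; ring
    rw [hzero]
    exact ⟨le_refl 0, hW0⟩
  · -- k % dm = r ≥ 1
    obtain ⟨b, hb⟩ : ∃ b, b = dm * (k / dm) := ⟨_, rfl⟩
    obtain ⟨r, hrk⟩ : ∃ r, r = k % dm := ⟨_, rfl⟩
    have hk_eq : b + r = k := by rw [hb, hrk]; exact Nat.div_add_mod k dm
    have hr1 : 1 ≤ r := by omega
    have hrlt : r < dm := by rw [hrk]; exact Nat.mod_lt k (by omega)
    have hdm2 : 2 ≤ dm := by omega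
    have hdm2R : (2:ℝ) ≤ dm := by exact_mod_cast hdm2
    obtain ⟨s, hs_def⟩ : ∃ s, s = b + 1 := ⟨_, rfl⟩
    obtain ⟨l, hl_def⟩ : ∃ l, l = b + dm := ⟨_, rfl⟩
    have hs_mod : s % dm = 1 := by
      rw [hs_def, hb, Nat.mul_add_mod]
      exact Nat.one_mod_eq_one.mpr (by omega)
    have hl_mod : l % dm = 0 := by
      rw [hl_def, hb]
      have h2 : dm * (k / dm) + dm = dm * (k / dm + 1) := by ring
      rw [h2]
      exact Nat.mul_mod_right _ _
    have hsl : s < l := by omega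
    have hsk : s ≤ k := by omega
    have hkl : k + 1 ≤ l := by omega
    have hnone : ∀ j : ℕ, s < j → j < l → ¬(j % dm = 0 ∨ j % dm = 1) := by
      intro j hj1 hj2
      have ht1 : b + 2 ≤ j := by omega
      have hmod : j % dm = j - b := by
        have h1 : j % dm = (j - b) % dm := by
          nth_rewrite 1 [show j = b + (j - b) from by omega]
          rw [hb, Nat.mul_add_mod]
        rw [h1, Nat.mod_eq_of_lt (by omega)]
      omega
    have hSK : (s:ℝ) ≤ (k:ℝ) := by exact_mod_cast hsk
    have hKL : (k:ℝ) + 1 ≤ (l:ℝ) := by exact_mod_cast hkl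
    have hmem : x ∈ Set.Icc ((s:ℕ):ℝ) ((l:ℕ):ℝ) := ⟨by linarith, by linarith⟩
    have hUx := hUaff s l (Or.inr hs_mod) (Or.inl hl_mod) hsl hnone x hmem
    rw [hU s (Or.inr hs_mod), hU l (Or.inl hl_mod)] at hUx
    -- the gap length
    have hlsn : l + 1 = s + dm := by omega
    have hls : (l:ℝ) - (s:ℝ) = (dm:ℝ) - 1 := by
      have h2 : ((l:ℕ):ℝ) + 1 = ((s:ℕ):ℝ) + (dm:ℝ) := by exact_mod_cast congrArg (Nat.cast : ℕ → ℝ) hlsn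
      linarith
    have hls0 : (l:ℝ) - (s:ℝ) ≠ 0 := by rw [hls]; intro h2; linarith
    -- simplify the secant slope
    have hgl : g l - g s = c * (((l:ℝ) - s) * ((l:ℝ) + s - 1)) := by
      rw [hgc, hgc]; ring
    have hdiv : (x - (s:ℝ)) * (g l - g s) / ((l:ℝ) - s)
        = (x - (s:ℝ)) * (c * ((l:ℝ) + s - 1)) := by
      rw [hgl]
      field_simp
    rw [hdiv] at hUx
    -- the key identity
    have key : U x - L x
        = c * ((x - (s:ℝ)) * ((l:ℝ) - x) - (x - (k:ℝ)) * ((k:ℝ) + 1 - x)) := by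
      rw [hUx, hLx]
      simp only [hgc]
      ring
    have h1 : 0 ≤ (k:ℝ) - s := by linarith
    have h2 : 0 ≤ (l:ℝ) - x := by linarith
    have h3 : 0 ≤ x - (k:ℝ) := by linarith
    have h4 : 0 ≤ (l:ℝ) - ((k:ℝ) + 1) := by linarith
    have h5 : 0 ≤ (k:ℝ) + 1 - x := by linarith
    have hE1 : 0 ≤ (x - (s:ℝ)) * ((l:ℝ) - x) - (x - (k:ℝ)) * ((k:ℝ) + 1 - x) := by
      nlinarith [mul_nonneg h1 h2, mul_nonneg h3 h4]
    have hE2 : (x - (s:ℝ)) * ((l:ℝ) - x) - (x - (k:ℝ)) * ((k:ℝ) + 1 - x)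
        ≤ ((dm:ℝ) - 1) ^ 2 / 4 := by
      nlinarith [sq_nonneg ((l:ℝ) + (s:ℝ) - 2*x), mul_nonneg h3 h5, hls]
    constructor
    · rw [key]; exact mul_nonneg hc0 hE1
    · rw [key, hW]
      exact mul_le_mul_of_nonneg_left hE2 hc0
end
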